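/- Let H be a 2-edge cover of a 2-edge-connected graph G, and let C1, C2 be two components of H each equal to a 4-cycle, say C1 = a1-a2-a3-a4-a1 and C2 = b1-b2-b3-b4-b1. Suppose G contains edges a1b1 and a2b2 (i.e., edges between consecutive vertices of C1 and consecutive vertices of C2). Then (H \ {a1a2, b1b2}) ∪ {a1b1, a2b2} is a 2-edge cover of the same size as H in which the vertices of C1 and C2 form a single 2-edge-connected component that is a cycle on 8 vertices. -/

import Mathlib

/-!
The two 4-cycles are distinct components of `H`, so their vertex sets are disjoint and the merged
edge set `C'` is the cycle `a2 a3 a4 a1 b1 b4 b3 b2` on eight distinct vertices. A cycle on at least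
three vertices is 2-edge-connected: after deleting one of its edges, walk around the other way.
`C'` is a component of `H'`: an edge of `H'` outside `C'` at a vertex of `C'` would be an edge of `H`
at a vertex of `C1` or `C2`, hence an edge of `C1` or `C2` other than the two deleted ones, all of
which lie in `C'`. Every vertex of `C'` has two edges in `C' ⊆ H'`, every other vertex keeps its
edges of `H`, and `|H'| = |H|` since the two new edges join different components, so are not in `H`.
-/

variable {V : Type*}

/-- Reachability between vertices using only edges from the edge set `F`. -/
def ReachE (F : Set (Sym2 V)) (a b : V) : Prop :=
  Relation.ReflTransGen (fun x y => s(x, y) ∈ F) a b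

/-- The set of vertices incident to at least one edge of `F`. -/
def eSupport (F : Set (Sym2 V)) : Set V :=
  {v | ∃ e ∈ F, v ∈ e}

/-- The edge set `F` is connected (as a graph on its support). -/
def ConnSet (F : Set (Sym2 V)) : Prop :=
  ∀ a ∈ eSupport F, ∀ b ∈ eSupport F, ReachE F a b

/-- The edge set `F` is a 2-edge-connected subgraph (on its support). -/
def TwoECSet (F : Set (Sym2 V)) : Prop :=
  ConnSet F ∧ ∀ a b : V, s(a, b) ∈ F → ReachE (F \ {s(a, b)}) a b

/-- `C` is (the edge set of) a connected component of the edge set `F`. -/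
def IsComponent (F C : Set (Sym2 V)) : Prop :=
  C.Nonempty ∧ C ⊆ F ∧ ConnSet C ∧
    ∀ e ∈ F, e ∉ C → ∀ v ∈ e, v ∉ eSupport C

/-- `H` is a 2-edge-connected spanning subgraph. -/
def TwoECSS (H : Set (Sym2 V)) : Prop :=
  (∀ a b : V, ReachE H a b) ∧ ∀ e ∈ H, ∀ a b : V, ReachE (H \ {e}) a b

open Function

section Reach

variable {F F' : Set (Sym2 V)} {a b : V}

theorem ReachE.symm (h : ReachE F a b) : ReachE F b a := by
  induction h with
  | refl => exact .refl
  | tail _ hbc ih => exact Relation.ReflTransGen.head (by rwa [Sym2.eq_swap]) ih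

theorem ReachE.mono (hF : F ⊆ F') (h : ReachE F a b) : ReachE F' a b :=
  Relation.ReflTransGen.mono (fun _ _ hxy => hF hxy) _ _ h

theorem reachE_of_forall_lt (g : ℕ → V) (k : ℕ) (h : ∀ m < k, s(g m, g (m + 1)) ∈ F) :
    ReachE F (g 0) (g k) := by
  induction k with
  | zero => exact .refl
  | succ k ih => exact (ih fun m hm => h m (by omega)).tail (h k (by omega))

end Reach

section Cycle

open Fin.NatCast

variable {n : ℕ} [NeZero n]

def cycleEdges (f : Fin n → V) : Set (Sym2 V) :=
  Set.range fun i => s(f i, f (i + 1))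

theorem eSupport_cycleEdges (f : Fin n → V) : eSupport (cycleEdges f) = Set.range f := by
  ext v
  constructor
  · rintro ⟨_, ⟨i, rfl⟩, hv⟩
    rcases Sym2.mem_iff.mp hv with rfl | rfl
    exacts [⟨i, rfl⟩, ⟨i + 1, rfl⟩]
  · rintro ⟨i, rfl⟩
    exact ⟨_, ⟨i, rfl⟩, Sym2.mem_mk_left _ _⟩

theorem reachE_add_of_forall_lt {f : Fin n → V} {S : Set (Sym2 V)} (i : Fin n) (k : ℕ)
    (h : ∀ m < k, s(f (i + (m : Fin n)), f (i + (m : Fin n) + 1)) ∈ S) :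
    ReachE S (f i) (f (i + (k : Fin n))) := by
  simpa using reachE_of_forall_lt (fun m : ℕ => f (i + (m : Fin n))) k
    (fun m hm => by simpa [add_assoc] using h m hm)

theorem connSet_cycleEdges (f : Fin n → V) : ConnSet (cycleEdges f) := by
  have h₀ (j : Fin n) : ReachE (cycleEdges f) (f 0) (f j) := by
    simpa using reachE_add_of_forall_lt (f := f) (S := cycleEdges f) 0 j.val
      fun m _ => ⟨(m : Fin n), by simp⟩
  rw [ConnSet, eSupport_cycleEdges]
  rintro _ ⟨i, rfl⟩ _ ⟨j, rfl⟩
  exact (h₀ i).symm.trans (h₀ j)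

theorem cycleEdges_edge_injective (hn : 3 ≤ n) {f : Fin n → V} (hf : Injective f) :
    Injective fun i => s(f i, f (i + 1)) := by
  intro i j hij
  rcases Sym2.eq_iff.mp hij with ⟨h, -⟩ | ⟨h₁, h₂⟩
  · exact hf h
  · -- the edge traversed backwards would force `i + 2 = i`
    have h2 : ((2 : ℕ) : Fin n) = 0 := by
      simpa [hf h₁, add_assoc, one_add_one_eq_two] using hf h₂
    have := Nat.le_of_dvd two_pos (Fin.natCast_eq_zero.mp h2)
    omega

theorem twoECSet_cycleEdges (hn : 3 ≤ n) {f : Fin n → V} (hf : Injective f) :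
    TwoECSet (cycleEdges f) := by
  refine ⟨connSet_cycleEdges f, ?_⟩
  rintro a b ⟨i, hi⟩
  -- walk on from `f (i + 1)` along the other `n - 1` edges of the cycle
  have hback : ReachE (cycleEdges f \ {s(f i, f (i + 1))}) (f (i + 1)) (f i) := by
    have := reachE_add_of_forall_lt (S := cycleEdges f \ {s(f i, f (i + 1))}) (i + 1) (n - 1)
      fun m hm => ⟨⟨_, rfl⟩, fun h => ?_⟩
    · have hn₁ : (1 : Fin n) + ((n - 1 : ℕ) : Fin n) = 0 := by
        rw [← Nat.cast_one, ← Nat.cast_add, Nat.add_sub_cancel' NeZero.one_le, Fin.natCast_self]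
      simpa [add_assoc, hn₁] using this
    · have h₀ : ((1 + m : ℕ) : Fin n) = 0 := by
        simpa [add_assoc] using cycleEdges_edge_injective hn hf h
      have := Nat.le_of_dvd (by omega) (Fin.natCast_eq_zero.mp h₀)
      omega
  rcases Sym2.eq_iff.mp hi with ⟨rfl, rfl⟩ | ⟨rfl, rfl⟩
  · rw [← hi]; exact hback.symm
  · rw [← hi]; exact hback

theorem two_le_ncard_incident_cycleEdges (hn : 3 ≤ n) {f : Fin n → V} (hf : Injective f)
    {v : V} (hv : v ∈ eSupport (cycleEdges f)) : 2 ≤ {e ∈ cycleEdges f | v ∈ e}.ncard := by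
  rw [eSupport_cycleEdges] at hv
  obtain ⟨i, rfl⟩ := hv
  have hne : s(f (i - 1), f (i - 1 + 1)) ≠ s(f i, f (i + 1)) :=
    fun h => by have := cycleEdges_edge_injective hn hf h; simp at this; omega
  rw [sub_add_cancel] at hne
  calc 2 = ({s(f (i - 1), f i), s(f i, f (i + 1))} : Set (Sym2 V)).ncard :=
        (Set.ncard_pair hne).symm
    _ ≤ _ := by
      refine Set.ncard_le_ncard ?_ ((Set.finite_range _).subset (Set.sep_subset _ _))
      rintro _ (rfl | rfl)
      exacts [⟨⟨i - 1, by simp only [sub_add_cancel]⟩, Sym2.mem_mk_right _ _⟩,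
        ⟨⟨i, rfl⟩, Sym2.mem_mk_left _ _⟩]

end Cycle

section Support

theorem eSupport_insert_mk (a b : V) (F : Set (Sym2 V)) :
    eSupport (insert s(a, b) F) = insert a (insert b (eSupport F)) := by
  ext v
  simp [eSupport, or_and_right, exists_or, or_assoc]

theorem eSupport_singleton_mk (a b : V) : eSupport {s(a, b)} = {a, b} := by
  ext v
  simp [eSupport]

theorem notMem_of_disjoint_eSupport {D D' : Set (Sym2 V)} {e : Sym2 V}
    (hdisj : Disjoint (eSupport D) (eSupport D')) (he : e ∈ D) : e ∉ D' := fun he' =>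
  Set.disjoint_left.mp hdisj ⟨e, he, Sym2.out_fst_mem e⟩ ⟨e, he', Sym2.out_fst_mem e⟩

end Support

section Component

variable {F C C₁ C₂ : Set (Sym2 V)} {e : Sym2 V} {a b v : V}

theorem IsComponent.mem_of_mem_eSupport (hC : IsComponent F C) (he : e ∈ F) (hv : v ∈ e)
    (hvC : v ∈ eSupport C) : e ∈ C :=
  by_contra fun h => hC.2.2.2 e he h v hv hvC

theorem IsComponent.mem_eSupport_of_reachE (hC : IsComponent F C) (h : ReachE F a b)
    (ha : a ∈ eSupport C) : b ∈ eSupport C := by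
  induction h with
  | refl => exact ha
  | tail _ hbc ih =>
    exact ⟨_, hC.mem_of_mem_eSupport hbc (Sym2.mem_mk_left _ _) ih, Sym2.mem_mk_right _ _⟩

theorem IsComponent.subset_of_mem_eSupport (h₁ : IsComponent F C₁) (h₂ : IsComponent F C₂)
    (hv₁ : v ∈ eSupport C₁) (hv₂ : v ∈ eSupport C₂) : C₁ ⊆ C₂ := by
  intro e he
  induction e using Sym2.ind with
  | _ x y =>
    have hx : x ∈ eSupport C₁ := ⟨_, he, Sym2.mem_mk_left x y⟩
    have hreach : ReachE F v x := (h₁.2.2.1 v hv₁ x hx).mono h₁.2.1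
    exact h₂.mem_of_mem_eSupport (h₁.2.1 he) (Sym2.mem_mk_left x y)
      (h₂.mem_eSupport_of_reachE hreach hv₂)

theorem IsComponent.disjoint_eSupport (h₁ : IsComponent F C₁) (h₂ : IsComponent F C₂)
    (hne : C₁ ≠ C₂) : Disjoint (eSupport C₁) (eSupport C₂) :=
  Set.disjoint_left.mpr fun _ hv₁ hv₂ => hne <|
    (h₁.subset_of_mem_eSupport h₂ hv₁ hv₂).antisymm (h₂.subset_of_mem_eSupport h₁ hv₂ hv₁)

end Component

section Exchange

variable {H C₁ C₂ : Set (Sym2 V)} {r₁ r₂ x₁ x₂ : Sym2 V}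

theorem IsComponent.exchange (h₁ : IsComponent H C₁) (h₂ : IsComponent H C₂) (hne : C₁ ≠ C₂)
    (hr₁ : r₁ ∈ C₁) (hr₂ : r₂ ∈ C₂)
    (hsupp : eSupport ((C₁ \ {r₁}) ∪ (C₂ \ {r₂}) ∪ {x₁, x₂}) ⊆ eSupport C₁ ∪ eSupport C₂)
    (hconn : ConnSet ((C₁ \ {r₁}) ∪ (C₂ \ {r₂}) ∪ {x₁, x₂})) :
    IsComponent ((H \ {r₁, r₂}) ∪ {x₁, x₂}) ((C₁ \ {r₁}) ∪ (C₂ \ {r₂}) ∪ {x₁, x₂}) := by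
  have hdisj := h₁.disjoint_eSupport h₂ hne
  refine ⟨⟨x₁, by simp⟩, ?_, hconn, ?_⟩
  · rintro e ((⟨he, hne₁⟩ | ⟨he, hne₂⟩) | hx)
    · have hne₂ : e ≠ r₂ := by
        rintro rfl
        exact notMem_of_disjoint_eSupport hdisj he hr₂
      exact Or.inl ⟨h₁.2.1 he, by simp_all⟩
    · have hne₁ : e ≠ r₁ := by
        rintro rfl
        exact notMem_of_disjoint_eSupport hdisj hr₁ he
      exact Or.inl ⟨h₂.2.1 he, by simp_all⟩
    · exact Or.inr hx
  · rintro e (⟨he, hr⟩ | hx) heC v hv hvC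
    · simp only [Set.mem_insert_iff, Set.mem_singleton_iff, not_or] at hr
      rcases hsupp hvC with hv₁ | hv₂
      · exact heC (Or.inl (Or.inl ⟨h₁.mem_of_mem_eSupport he hv hv₁, hr.1⟩))
      · exact heC (Or.inl (Or.inr ⟨h₂.mem_of_mem_eSupport he hv hv₂, hr.2⟩))
    · exact heC (Or.inr hx)

theorem two_le_ncard_incident_exchange {C R A : Set (Sym2 V)} (hA : A.Finite)
    (hH : ∀ v, 2 ≤ {e ∈ H | v ∈ e}.ncard) (hC : C ⊆ (H \ R) ∪ A)
    (hCdeg : ∀ v ∈ eSupport C, 2 ≤ {e ∈ C | v ∈ e}.ncard) (hR : eSupport R ⊆ eSupport C)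
    (v : V) : 2 ≤ {e ∈ (H \ R) ∪ A | v ∈ e}.ncard := by
  have hfin : {e ∈ (H \ R) ∪ A | v ∈ e}.Finite := by
    refine ((Set.finite_of_ncard_pos (by linarith [hH v])).union hA).subset ?_
    rintro e ⟨⟨he, -⟩ | he, hv⟩
    exacts [Or.inl ⟨he, hv⟩, Or.inr he]
  by_cases hv : v ∈ eSupport C
  · exact (hCdeg v hv).trans (Set.ncard_le_ncard (fun e he => ⟨hC he.1, he.2⟩) hfin)
  · refine (hH v).trans <| Set.ncard_le_ncard
      (fun e ⟨he, hve⟩ => ⟨Or.inl ⟨he, fun heR => ?_⟩, hve⟩) hfin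
    exact hv (hR ⟨e, heR, hve⟩)

end Exchange

theorem Set.ncard_sdiff_pair_union_pair {α : Type*} {s : Set α} {r₁ r₂ x₁ x₂ : α}
    (hr₁ : r₁ ∈ s) (hr₂ : r₂ ∈ s) (hr : r₁ ≠ r₂) (hx₁ : x₁ ∉ s) (hx₂ : x₂ ∉ s) (hx : x₁ ≠ x₂) :
    ((s \ {r₁, r₂}) ∪ {x₁, x₂}).ncard = s.ncard := by
  have hx₂r : x₂ ≠ r₂ := fun h => hx₂ (h ▸ hr₂)
  have hrw : (s \ {r₁, r₂}) ∪ {x₁, x₂} = insert x₁ (insert x₂ (s \ {r₁}) \ {r₂}) := by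
    ext e
    by_cases h₁ : e = x₁ <;> by_cases h₂ : e = x₂ <;> simp_all [and_assoc]
  rw [hrw, Set.ncard_exchange (by simp [hx, hx₁]) (by simp [hr₂, hr.symm]),
    Set.ncard_exchange hx₂ hr₁]

theorem merge_two_four_cycles_general (G : SimpleGraph V)
    (H : Set (Sym2 V)) (hHG : H ⊆ G.edgeSet)
    (hcover : ∀ v : V, 2 ≤ {e ∈ H | v ∈ e}.ncard)
    (a1 a2 a3 a4 b1 b2 b3 b4 : V)
    (hadist : List.Pairwise (· ≠ ·) [a1, a2, a3, a4])
    (hbdist : List.Pairwise (· ≠ ·) [b1, b2, b3, b4])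
    (C1 C2 : Set (Sym2 V))
    (hC1 : C1 = {s(a1, a2), s(a2, a3), s(a3, a4), s(a4, a1)})
    (hC2 : C2 = {s(b1, b2), s(b2, b3), s(b3, b4), s(b4, b1)})
    (hC1comp : IsComponent H C1) (hC2comp : IsComponent H C2)
    (hne : C1 ≠ C2)
    (he1 : s(a1, b1) ∈ G.edgeSet) (he2 : s(a2, b2) ∈ G.edgeSet) :
    ∀ H' : Set (Sym2 V),
      H' = (H \ {s(a1, a2), s(b1, b2)}) ∪ {s(a1, b1), s(a2, b2)} →
      H' ⊆ G.edgeSet ∧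
      (∀ v : V, 2 ≤ {e ∈ H' | v ∈ e}.ncard) ∧
      H'.ncard = H.ncard ∧
      ∃ C' : Set (Sym2 V), IsComponent H' C' ∧ TwoECSet C' ∧
        C' = {s(a2, a3), s(a3, a4), s(a4, a1), s(a1, b1),
              s(b1, b4), s(b4, b3), s(b3, b2), s(b2, a2)} ∧
        eSupport C' = {a1, a2, a3, a4, b1, b2, b3, b4} := by
  rintro H' rfl
  obtain ⟨C', hC'⟩ : ∃ C' : Set (Sym2 V), C' = {s(a2, a3), s(a3, a4), s(a4, a1), s(a1, b1),
      s(b1, b4), s(b4, b3), s(b3, b2), s(b2, a2)} := ⟨_, rfl⟩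
  have hsupp1 : eSupport C1 = {a1, a2, a3, a4} := by
    rw [hC1]; simp only [eSupport_insert_mk, eSupport_singleton_mk]; ext; simp; tauto
  have hsupp2 : eSupport C2 = {b1, b2, b3, b4} := by
    rw [hC2]; simp only [eSupport_insert_mk, eSupport_singleton_mk]; ext; simp; tauto
  have hsupp' : eSupport C' = {a1, a2, a3, a4, b1, b2, b3, b4} := by
    rw [hC']; simp only [eSupport_insert_mk, eSupport_singleton_mk]; ext; simp; tauto
  have hdisj := hC1comp.disjoint_eSupport hC2comp hne
  rw [hsupp1, hsupp2] at hdisj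
  simp [Set.disjoint_left] at hadist hbdist hdisj
  have hf : Injective ![a2, a3, a4, a1, b1, b4, b3, b2] := List.nodup_ofFn.mp (by simp; tauto)
  have hcyc : C' = cycleEdges ![a2, a3, a4, a1, b1, b4, b3, b2] := by
    ext e; simp [hC', cycleEdges, Fin.exists_fin_succ, eq_comm]
  have hexch : C' = (C1 \ {s(a1, a2)}) ∪ (C2 \ {s(b1, b2)}) ∪ {s(a1, b1), s(a2, b2)} := by
    rw [hC', hC1, hC2, Set.insert_sdiff_self_of_notMem (by simp; tauto),
      Set.insert_sdiff_self_of_notMem (by simp; tauto), Sym2.eq_swap (a := b2) (b := b3),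
      Sym2.eq_swap (a := b3) (b := b4), Sym2.eq_swap (a := b4) (b := b1),
      Sym2.eq_swap (a := a2) (b := b2)]
    simp only [Set.insert_union, Set.singleton_union, Set.insert_comm]
  have hcomp : IsComponent ((H \ {s(a1, a2), s(b1, b2)}) ∪ {s(a1, b1), s(a2, b2)}) C' := by
    rw [hexch]
    refine hC1comp.exchange hC2comp hne (by simp [hC1]) (by simp [hC2]) ?_ ?_
    · rw [← hexch, hsupp', hsupp1, hsupp2]
      simp only [Set.insert_union, Set.singleton_union, subset_rfl]
    · rw [← hexch, hcyc]; exact connSet_cycleEdges _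
  have hnotH {x y : V} (hx : x ∈ eSupport C1) (hy : y ∉ eSupport C1) : s(x, y) ∉ H :=
    fun h => hy (hC1comp.mem_eSupport_of_reachE (.single h) hx)
  refine ⟨Set.union_subset (Set.sdiff_subset.trans hHG) (Set.pair_subset he1 he2), ?_, ?_,
    C', hcomp, hcyc ▸ twoECSet_cycleEdges (by norm_num) hf, hC', hsupp'⟩
  · refine two_le_ncard_incident_exchange (Set.toFinite _) hcover hcomp.2.1 ?_ ?_
    · rw [hcyc]; exact fun v ↦ two_le_ncard_incident_cycleEdges (by norm_num) hf
    · simp [hsupp', eSupport_insert_mk, eSupport_singleton_mk, Set.insert_subset_iff]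
  · refine Set.ncard_sdiff_pair_union_pair (hC1comp.2.1 (by simp [hC1]))
      (hC2comp.2.1 (by simp [hC2])) (by simp; tauto) (hnotH ?_ ?_) (hnotH ?_ ?_) (by simp; tauto)
      <;> simp [hsupp1] <;> tauto

/-- Merging two 4-cycles into an 8-cycle.  Let `H` be a 2-edge cover of a
2-edge-connected graph `G`, and let `C1 = a1-a2-a3-a4-a1` and `C2 = b1-b2-b3-b4-b1`
be two components of `H` that are 4-cycles.  Suppose `G` contains the edges `a1b1`
and `a2b2`.  Then `(H \ {a1a2, b1b2}) ∪ {a1b1, a2b2}` is a 2-edge cover of `G` of the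
same size as `H` in which the vertices of `C1` and `C2` form a single
2-edge-connected component that is a cycle on 8 vertices. -/
theorem merge_two_four_cycles (G : SimpleGraph V)
    (hG : TwoECSS (G.edgeSet : Set (Sym2 V)))
    (H : Set (Sym2 V)) (hHG : H ⊆ G.edgeSet)
    (hcover : ∀ v : V, 2 ≤ {e ∈ H | v ∈ e}.ncard)
    (a1 a2 a3 a4 b1 b2 b3 b4 : V)
    (hadist : List.Pairwise (· ≠ ·) [a1, a2, a3, a4])
    (hbdist : List.Pairwise (· ≠ ·) [b1, b2, b3, b4])
    (C1 C2 : Set (Sym2 V))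
    (hC1 : C1 = {s(a1, a2), s(a2, a3), s(a3, a4), s(a4, a1)})
    (hC2 : C2 = {s(b1, b2), s(b2, b3), s(b3, b4), s(b4, b1)})
    (hC1comp : IsComponent H C1) (hC2comp : IsComponent H C2)
    (hne : C1 ≠ C2)
    (he1 : s(a1, b1) ∈ G.edgeSet) (he2 : s(a2, b2) ∈ G.edgeSet) :
    ∀ H' : Set (Sym2 V),
      H' = (H \ {s(a1, a2), s(b1, b2)}) ∪ {s(a1, b1), s(a2, b2)} →
      H' ⊆ G.edgeSet ∧
      (∀ v : V, 2 ≤ {e ∈ H' | v ∈ e}.ncard) ∧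
      H'.ncard = H.ncard ∧
      ∃ C' : Set (Sym2 V), IsComponent H' C' ∧ TwoECSet C' ∧
        C' = {s(a2, a3), s(a3, a4), s(a4, a1), s(a1, b1),
              s(b1, b4), s(b4, b3), s(b3, b2), s(b2, a2)} ∧
        eSupport C' = {a1, a2, a3, a4, b1, b2, b3, b4} :=
  merge_two_four_cycles_general G H hHG hcover a1 a2 a3 a4 b1 b2 b3 b4 hadist hbdist C1 C2 hC1 hC2
    hC1comp hC2comp hne he1 he2
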